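/- Let C be an [n,k,d] binary linear code. Consider the filtration F_i = Ī(Y,n−i) on S̄ and the induced filtration F_i(S̄/F̄(C)) = (F̄(C)+Ī(Y,n−i))/F̄(C) on S̄/F̄(C). Then the positive-degree part of the associated graded module has α-invariant n−d; concretely: (i) for every integer a with 1 ≤ a < d one has F̄(C) + Ī(Y,a) = F̄(C) + Ī(Y,a+1) (so the graded pieces in degrees n−d+1,…,n−1 vanish), and (ii) F̄(C) + Ī(Y,d) ≠ F̄(C) + Ī(Y,d+1) (so the graded piece in degree n−d is nonzero). -/

import Mathlib

open scoped Classical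
open MvPolynomial

set_option synthInstance.maxHeartbeats 1000000

noncomputable section

/-- The ideal `I(Y,a)` of `S = 𝔽₂[y_1,…,y_n]` generated by all squarefree
monomials `y_{i_1}⋯y_{i_a}`; it is `S` for `a = 0` and `(0)` for `a > n`. -/
def sqfreeIdeal (n : ℕ) (a : ℕ) : Ideal (MvPolynomial (Fin n) (ZMod 2)) :=
  Ideal.span {f | ∃ T : Finset (Fin n), T.card = a ∧ f = ∏ i ∈ T, MvPolynomial.X i}

/-- The ideal `⟨y_1²−y_1,…,y_n²−y_n⟩` of field equations. -/
def fieldEqIdeal (n : ℕ) : Ideal (MvPolynomial (Fin n) (ZMod 2)) :=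
  Ideal.span {f | ∃ i : Fin n, f = MvPolynomial.X i ^ 2 - MvPolynomial.X i}

/-- The linear form `ℓ_i = ∑_j G_{ji} x_j` dual to the `i`-th column of `G`. -/
def dualForm {k n : ℕ} (G : Matrix (Fin k) (Fin n) (ZMod 2)) (i : Fin n) :
    MvPolynomial (Fin k) (ZMod 2) :=
  ∑ j, MvPolynomial.C (G j i) * MvPolynomial.X j

/-- `F(C) = ker γ`, where `γ : S → R` is the `𝔽₂`-algebra map `y_i ↦ ℓ_i`. -/
def relIdeal {k n : ℕ} (G : Matrix (Fin k) (Fin n) (ZMod 2)) :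
    Ideal (MvPolynomial (Fin n) (ZMod 2)) :=
  RingHom.ker (MvPolynomial.aeval (dualForm G) :
    MvPolynomial (Fin n) (ZMod 2) →ₐ[ZMod 2] MvPolynomial (Fin k) (ZMod 2)).toRingHom

/-- The binary linear code with generating matrix `G`: the row space of `G`. -/
def code {k n : ℕ} (G : Matrix (Fin k) (Fin n) (ZMod 2)) :
    Submodule (ZMod 2) (Fin n → ZMod 2) :=
  LinearMap.range (Matrix.vecMulLinear G)

/-- `d` is the minimum distance of the binary code generated by `G`. -/
def IsMinDist {k n : ℕ} (G : Matrix (Fin k) (Fin n) (ZMod 2)) (d : ℕ) : Prop :=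
  IsLeast {w : ℕ | ∃ v ∈ code G, v ≠ 0 ∧ hammingNorm v = w} d

/-!
Over a finite field `K` with `q` elements, `J + ⟨X_i^q - X_i⟩` is the vanishing ideal of the zero
locus of `J`: modulo the field equations every polynomial equals its interpolation `∑ₐ f(a) δₐ` by
indicator polynomials, and `δₐ` lies in `J + ⟨X_i^q - X_i⟩` as soon as some `g ∈ J` has
`g(a) ≠ 0`. So ideals of `S̄` are determined by zero loci. The zero locus of `F(C)` is `C` (a word
outside `C` is detected by a parity check `h`, whose linear form `∑ hᵢ yᵢ` lies in `F(C)`), and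
that of `I(Y,a)` is the set of words of weight `< a`. Hence `F̄(C) + Ī(Y,a)` is determined by the
codewords of weight `< a`: only `0` when `1 ≤ a ≤ d`, but also a word of weight `d` when
`a = d + 1`.
-/

namespace MvPolynomial

def fieldEquations (σ K : Type*) [Fintype K] [CommRing K] : Ideal (MvPolynomial σ K) :=
  Ideal.span (Set.range fun i => X i ^ Fintype.card K - X i)

theorem X_pow_card_sub_X_mem_fieldEquations {σ K : Type*} [Fintype K] [CommRing K] (i : σ) :
    X i ^ Fintype.card K - X i ∈ fieldEquations σ K :=
  Ideal.subset_span ⟨i, rfl⟩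

theorem zeroLocus_sup {σ k K : Type*} [Field k] [Field K] [Algebra k K]
    (I J : Ideal (MvPolynomial σ k)) :
    zeroLocus K (I ⊔ J) = zeroLocus K I ∩ zeroLocus K J :=
  zeroLocus_vanishingIdeal_galoisConnection.l_sup

section FiniteField

universe u

variable {σ K : Type u} [Fintype K] [Field K]

theorem fieldEquations_le_vanishingIdeal (V : Set (σ → K)) :
    fieldEquations σ K ≤ vanishingIdeal K V := by
  rw [fieldEquations, Ideal.span_le]
  rintro _ ⟨i, rfl⟩ x _
  simp [FiniteField.pow_card]

theorem X_sub_C_pow_card (i : σ) (c : K) :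
    (X i - C c : MvPolynomial σ K) ^ Fintype.card K = X i ^ Fintype.card K - C c := by
  obtain ⟨n, hp, hcard⟩ := FiniteField.card K (ringChar K)
  have : Fact (ringChar K).Prime := ⟨hp⟩
  rw [hcard, sub_pow_char_pow, ← C_pow, ← hcard, FiniteField.pow_card]

variable [Fintype σ]

theorem X_mul_indicator_sub_mem (a : σ → K) (i : σ) :
    X i * indicator a - C (a i) * indicator a ∈ fieldEquations σ K := by
  have hfactor : X i * indicator a - C (a i) * indicator a =
      -(X i ^ Fintype.card K - X i) *
        ∏ j ∈ Finset.univ.erase i, (1 - (X j - C (a j)) ^ (Fintype.card K - 1)) := by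
    rw [← sub_mul, indicator, ← Finset.mul_prod_erase _ _ (Finset.mem_univ i), ← mul_assoc]
    congr 1
    have hpow : (X i - C (a i) : MvPolynomial σ K) ^ Fintype.card K =
        (X i - C (a i)) ^ (Fintype.card K - 1) * (X i - C (a i)) := by
      rw [← pow_succ, Nat.sub_add_cancel Fintype.card_pos]
    linear_combination hpow - X_sub_C_pow_card i (a i)
  rw [hfactor]
  exact Ideal.mul_mem_right _ _ (neg_mem (X_pow_card_sub_X_mem_fieldEquations i))

theorem mul_indicator_sub_mem (f : MvPolynomial σ K) (a : σ → K) :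
    f * indicator a - C (eval a f) * indicator a ∈ fieldEquations σ K := by
  induction f using MvPolynomial.induction_on with
  | C c => simp
  | add f g hf hg =>
    rw [map_add, map_add, add_mul, add_mul, add_sub_add_comm]
    exact add_mem hf hg
  | mul_X f i hf =>
    have key : f * X i * indicator a - C (eval a (f * X i)) * indicator a =
        f * (X i * indicator a - C (a i) * indicator a) +
          C (a i) * (f * indicator a - C (eval a f) * indicator a) := by
      simp only [map_mul, eval_X]; ring
    rw [key]
    exact add_mem (Ideal.mul_mem_left _ _ (X_mul_indicator_sub_mem a i))
      (Ideal.mul_mem_left _ _ hf)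

theorem sum_indicator : ∑ a : σ → K, indicator a = (1 : MvPolynomial σ K) := by
  refine (sub_eq_zero.mp (eq_zero_of_eval_eq_zero σ K _ (fun v => ?_) ?_)).symm
  · rw [map_sub, map_one, map_sum, Finset.sum_eq_single v]
    · rw [eval_indicator_apply_eq_one, sub_self]
    · exact fun b _ hb => eval_indicator_apply_eq_zero v b (Ne.symm hb)
    · exact fun h => absurd (Finset.mem_univ v) h
  · refine sub_mem ?_ (sum_mem fun a _ => indicator_mem_restrictDegree a)
    rw [mem_restrictDegree, support_one]
    rintro s hs i
    rw [Finset.mem_singleton.mp hs]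
    exact Nat.zero_le _

theorem sub_sum_C_eval_mul_indicator_mem (f : MvPolynomial σ K) :
    f - ∑ a : σ → K, C (eval a f) * indicator a ∈ fieldEquations σ K := by
  have hsum : f - ∑ a : σ → K, C (eval a f) * indicator a =
      ∑ a : σ → K, (f * indicator a - C (eval a f) * indicator a) := by
    rw [Finset.sum_sub_distrib, ← Finset.mul_sum, sum_indicator, mul_one]
  rw [hsum]
  exact sum_mem fun a _ => mul_indicator_sub_mem f a

theorem indicator_mem_sup_of_eval_ne_zero {J : Ideal (MvPolynomial σ K)} {g : MvPolynomial σ K}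
    (hg : g ∈ J) {a : σ → K} (ha : eval a g ≠ 0) : indicator a ∈ J ⊔ fieldEquations σ K := by
  have key : indicator a = C (eval a g)⁻¹ *
      (g * indicator a - (g * indicator a - C (eval a g) * indicator a)) := by
    rw [sub_sub_cancel, ← mul_assoc, ← C_mul, inv_mul_cancel₀ ha, C_1, one_mul]
  rw [key]
  exact Ideal.mul_mem_left _ _ (sub_mem (Ideal.mem_sup_left (Ideal.mul_mem_right _ _ hg))
    (Ideal.mem_sup_right (mul_indicator_sub_mem g a)))

theorem vanishingIdeal_zeroLocus_eq_sup (J : Ideal (MvPolynomial σ K)) :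
    vanishingIdeal K (zeroLocus K J) = J ⊔ fieldEquations σ K := by
  refine le_antisymm (fun f hf => ?_)
    (sup_le (le_vanishingIdeal_zeroLocus J) (fieldEquations_le_vanishingIdeal _))
  rw [← sub_add_cancel f (∑ a : σ → K, C (eval a f) * indicator a)]
  refine add_mem (Ideal.mem_sup_right (sub_sum_C_eval_mul_indicator_mem f))
    (sum_mem fun a _ => ?_)
  by_cases ha : a ∈ zeroLocus K J
  · rw [show eval a f = 0 from hf a ha, C_0, zero_mul]
    exact zero_mem _
  · obtain ⟨g, hg, hga⟩ : ∃ g ∈ J, eval a g ≠ 0 := by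
      simpa [mem_zeroLocus_iff] using ha
    exact Ideal.mul_mem_left _ _ (indicator_mem_sup_of_eval_ne_zero hg hga)

theorem zeroLocus_vanishingIdeal (V : Set (σ → K)) : zeroLocus K (vanishingIdeal K V) = V := by
  refine le_antisymm (fun x hx => ?_) (zeroLocus_vanishingIdeal_le V)
  by_contra hxV
  have hmem : indicator x ∈ vanishingIdeal K V := fun y hy =>
    eval_indicator_apply_eq_zero y x (ne_of_mem_of_not_mem hy hxV)
  exact one_ne_zero ((eval_indicator_apply_eq_one x).symm.trans (hx _ hmem))

theorem map_mk_fieldEquations_eq_iff (J₁ J₂ : Ideal (MvPolynomial σ K)) :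
    J₁.map (Ideal.Quotient.mk (fieldEquations σ K)) = J₂.map (Ideal.Quotient.mk _) ↔
      zeroLocus K J₁ = zeroLocus K J₂ := by
  rw [Ideal.map_eq_iff_sup_ker_eq_of_surjective _ Ideal.Quotient.mk_surjective, Ideal.mk_ker,
    ← vanishingIdeal_zeroLocus_eq_sup, ← vanishingIdeal_zeroLocus_eq_sup]
  exact (Function.LeftInverse.injective zeroLocus_vanishingIdeal).eq_iff

end FiniteField

end MvPolynomial

theorem fieldEqIdeal_eq_fieldEquations (n : ℕ) :
    fieldEqIdeal n = fieldEquations (Fin n) (ZMod 2) := by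
  rw [fieldEqIdeal, fieldEquations, ZMod.card]
  congr 1
  ext f
  simp [eq_comm]

theorem map_mk_fieldEqIdeal_eq_iff {n : ℕ} (J₁ J₂ : Ideal (MvPolynomial (Fin n) (ZMod 2))) :
    J₁.map (Ideal.Quotient.mk (fieldEqIdeal n)) = J₂.map (Ideal.Quotient.mk (fieldEqIdeal n)) ↔
      zeroLocus (ZMod 2) J₁ = zeroLocus (ZMod 2) J₂ := by
  rw [fieldEqIdeal_eq_fieldEquations]
  exact map_mk_fieldEquations_eq_iff J₁ J₂

theorem hammingNorm_lt_iff_forall_card_eq {ι β : Type*} [Fintype ι] [Zero β] [DecidableEq β]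
    (x : ι → β) (a : ℕ) : hammingNorm x < a ↔ ∀ T : Finset ι, T.card = a → ∃ i ∈ T, x i = 0 := by
  constructor
  · intro hlt T hcard
    by_contra! hT
    have hsub : T ⊆ Finset.univ.filter (x · ≠ 0) := fun i hi =>
      Finset.mem_filter.mpr ⟨Finset.mem_univ i, hT i hi⟩
    exact (Finset.card_le_card hsub).not_gt (hcard ▸ hlt)
  · intro h
    by_contra! hle
    obtain ⟨T, hT, hcard⟩ := Finset.exists_subset_card_eq hle
    obtain ⟨i, hi, hxi⟩ := h T hcard
    exact (Finset.mem_filter.mp (hT hi)).2 hxi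

theorem zeroLocus_sqfreeIdeal (n a : ℕ) :
    zeroLocus (ZMod 2) (sqfreeIdeal n a) = {x | hammingNorm x < a} := by
  ext x
  simp only [sqfreeIdeal, zeroLocus_span, Set.mem_ofPred_eq, hammingNorm_lt_iff_forall_card_eq]
  constructor
  · intro hx T hcard
    simpa [Finset.prod_eq_zero_iff] using hx _ ⟨T, hcard, rfl⟩
  · rintro hx _ ⟨T, hcard, rfl⟩
    simpa [Finset.prod_eq_zero_iff] using hx T hcard

open Matrix

theorem eval_vecMul_eq_eval_aeval_dualForm {k n : ℕ} (G : Matrix (Fin k) (Fin n) (ZMod 2))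
    (c : Fin k → ZMod 2) (f : MvPolynomial (Fin n) (ZMod 2)) :
    eval (c ᵥ* G) f = eval c (aeval (dualForm G) f) := by
  have h : eval c ∘ dualForm G = c ᵥ* G := by
    funext i
    simp [dualForm, vecMul, dotProduct, mul_comm]
  rw [← h, eval_assoc, aeval_def, algebraMap_eq]

theorem aeval_dualForm_sum_C_mul_X {k n : ℕ} (G : Matrix (Fin k) (Fin n) (ZMod 2))
    (h : Fin n → ZMod 2) :
    aeval (dualForm G) (∑ i, C (h i) * X i) = ∑ j, C ((G *ᵥ h) j) * X j := by
  simp only [dualForm, map_sum, map_mul, aeval_C, aeval_X, algebraMap_eq, Finset.mul_sum,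
    mulVec, dotProduct, Finset.sum_mul]
  rw [Finset.sum_comm]
  refine Finset.sum_congr rfl fun j _ => Finset.sum_congr rfl fun i _ => ?_
  ring

theorem zeroLocus_relIdeal {k n : ℕ} (G : Matrix (Fin k) (Fin n) (ZMod 2)) :
    zeroLocus (ZMod 2) (relIdeal G) = code G := by
  ext x
  constructor
  · intro hx
    by_contra hxC
    obtain ⟨φ, hφx, hφC⟩ := Submodule.exists_dual_map_eq_bot_of_notMem hxC inferInstance
    let h : Fin n → ZMod 2 := fun i => φ fun j => if i = j then 1 else 0
    have hGh : G *ᵥ h = 0 := by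
      funext j
      have hrow : G.row j ∈ code G := ⟨Pi.single j 1, by simp [single_vecMul]⟩
      have h0 : φ (G.row j) = 0 := (Submodule.eq_bot_iff _).mp hφC _ (Submodule.mem_map_of_mem hrow)
      rw [LinearMap.pi_apply_eq_sum_univ] at h0
      simpa [mulVec, dotProduct] using h0
    have hL : ∑ i, C (h i) * X i ∈ relIdeal G := by
      rw [relIdeal, RingHom.mem_ker]
      exact (aeval_dualForm_sum_C_mul_X G h).trans (by simp [hGh])
    apply hφx
    rw [LinearMap.pi_apply_eq_sum_univ]
    simpa [mul_comm] using hx _ hL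
  · rintro ⟨c, rfl⟩ f hf
    rw [aeval_eq_eval, vecMulLinear_apply, eval_vecMul_eq_eval_aeval_dualForm]
    rw [relIdeal, RingHom.mem_ker] at hf
    rw [show aeval (dualForm G) f = 0 from hf, map_zero]

theorem zeroLocus_relIdeal_sup_sqfreeIdeal {k n : ℕ} (G : Matrix (Fin k) (Fin n) (ZMod 2))
    (a : ℕ) : zeroLocus (ZMod 2) (relIdeal G ⊔ sqfreeIdeal n a) =
      (code G : Set (Fin n → ZMod 2)) ∩ {x | hammingNorm x < a} := by
  rw [zeroLocus_sup, zeroLocus_relIdeal, zeroLocus_sqfreeIdeal]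

theorem IsMinDist.code_inter_hammingNorm_lt_eq_singleton_zero {k n d : ℕ}
    {G : Matrix (Fin k) (Fin n) (ZMod 2)} (hd : IsMinDist G d) {a : ℕ} (ha : 1 ≤ a) (had : a ≤ d) :
    (code G : Set (Fin n → ZMod 2)) ∩ {x | hammingNorm x < a} = {0} := by
  ext x
  simp only [Set.mem_inter_iff, SetLike.mem_coe, Set.mem_ofPred_eq, Set.mem_singleton_iff]
  constructor
  · rintro ⟨hxC, hxa⟩
    by_contra hx0
    exact (hd.2 ⟨x, hxC, hx0, rfl⟩).not_gt (hxa.trans_le had)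
  · rintro rfl
    exact ⟨zero_mem _, by rwa [hammingNorm_zero]⟩

theorem binary_assocGraded_alpha_general {k n d : ℕ}
    (G : Matrix (Fin k) (Fin n) (ZMod 2)) (hd : IsMinDist G d) :
    (∀ a : ℕ, 1 ≤ a → a < d →
      (relIdeal G).map (Ideal.Quotient.mk (fieldEqIdeal n)) +
          (sqfreeIdeal n a).map (Ideal.Quotient.mk (fieldEqIdeal n)) =
        (relIdeal G).map (Ideal.Quotient.mk (fieldEqIdeal n)) +
          (sqfreeIdeal n (a + 1)).map (Ideal.Quotient.mk (fieldEqIdeal n))) ∧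
    (relIdeal G).map (Ideal.Quotient.mk (fieldEqIdeal n)) +
        (sqfreeIdeal n d).map (Ideal.Quotient.mk (fieldEqIdeal n)) ≠
      (relIdeal G).map (Ideal.Quotient.mk (fieldEqIdeal n)) +
        (sqfreeIdeal n (d + 1)).map (Ideal.Quotient.mk (fieldEqIdeal n)) := by
  have key : ∀ a b : ℕ,
      (relIdeal G).map (Ideal.Quotient.mk (fieldEqIdeal n)) +
          (sqfreeIdeal n a).map (Ideal.Quotient.mk (fieldEqIdeal n)) =
        (relIdeal G).map (Ideal.Quotient.mk (fieldEqIdeal n)) +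
          (sqfreeIdeal n b).map (Ideal.Quotient.mk (fieldEqIdeal n)) ↔
      (code G : Set (Fin n → ZMod 2)) ∩ {x | hammingNorm x < a} =
        (code G : Set (Fin n → ZMod 2)) ∩ {x | hammingNorm x < b} := by
    intro a b
    rw [Submodule.add_eq_sup, Submodule.add_eq_sup, ← Ideal.map_sup, ← Ideal.map_sup,
      map_mk_fieldEqIdeal_eq_iff, zeroLocus_relIdeal_sup_sqfreeIdeal,
      zeroLocus_relIdeal_sup_sqfreeIdeal]
  refine ⟨fun a ha had => (key a (a + 1)).mpr ?_, fun h => ?_⟩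
  · rw [hd.code_inter_hammingNorm_lt_eq_singleton_zero ha had.le,
      hd.code_inter_hammingNorm_lt_eq_singleton_zero (by omega) had]
  · obtain ⟨v, hvC, -, hvw⟩ := hd.1
    have hv : v ∈ (code G : Set (Fin n → ZMod 2)) ∩ {x | hammingNorm x < d + 1} :=
      ⟨hvC, by simp [hvw]⟩
    rw [← (key d (d + 1)).mp h] at hv
    exact lt_irrefl d (hvw ▸ hv.2)

/-- the positive-degree part of the associated graded module of
`S̄/F̄(C)` for the filtration `F_i = Ī(Y,n−i)` has `α`-invariant `n−d`;
concretely: (i) for `1 ≤ a < d` one has `F̄(C) + Ī(Y,a) = F̄(C) + Ī(Y,a+1)`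
(the graded pieces in degrees `n−d+1,…,n−1` vanish), while
(ii) `F̄(C) + Ī(Y,d) ≠ F̄(C) + Ī(Y,d+1)` (the graded piece in degree `n−d` is
nonzero). -/
theorem binary_assocGraded_alpha {k n d : ℕ} (hk : 0 < k) (hn : 0 < n)
    (G : Matrix (Fin k) (Fin n) (ZMod 2)) (hrank : G.rank = k) (hd : IsMinDist G d) :
    (∀ a : ℕ, 1 ≤ a → a < d →
      (relIdeal G).map (Ideal.Quotient.mk (fieldEqIdeal n)) +
          (sqfreeIdeal n a).map (Ideal.Quotient.mk (fieldEqIdeal n)) =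
        (relIdeal G).map (Ideal.Quotient.mk (fieldEqIdeal n)) +
          (sqfreeIdeal n (a + 1)).map (Ideal.Quotient.mk (fieldEqIdeal n))) ∧
    (relIdeal G).map (Ideal.Quotient.mk (fieldEqIdeal n)) +
        (sqfreeIdeal n d).map (Ideal.Quotient.mk (fieldEqIdeal n)) ≠
      (relIdeal G).map (Ideal.Quotient.mk (fieldEqIdeal n)) +
        (sqfreeIdeal n (d + 1)).map (Ideal.Quotient.mk (fieldEqIdeal n)) :=
  binary_assocGraded_alpha_general G hd
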